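/- Let ℛ be a linear growing TRS over 𝓖 and let 𝒞'_T(ℛ) be the extension of 𝒞_T(ℛ) by the redex-recognition states ⟪t⟫ and q_r. Then a ground term s ∈ 𝒯(𝓖) satisfies s →_{Γ'}* q_r if and only if s is reducible with respect to ℛ; consequently L(𝒞'_T(ℛ)) = L(𝒞_T(ℛ)). -/

import Mathlib

set_option maxHeartbeats 1000000

/-! ## Terms over a signature -/

/-- Terms over a signature given by a type `F` of function symbols together with
an arity function `ar`; variables are natural numbers. -/
inductive Term (F : Type) (ar : F → ℕ) : Type
  | var : ℕ → Term F ar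
  | app : (f : F) → (Fin (ar f) → Term F ar) → Term F ar

namespace Term

variable {F : Type} {ar : F → ℕ}

/-- The (finite) set of variables of a term. -/
def vars : Term F ar → Finset ℕ
  | var n => {n}
  | app _ ts => Finset.univ.biUnion fun i => (ts i).vars

/-- A term is ground if it contains no variables. -/
def Ground (t : Term F ar) : Prop := t.vars = ∅

/-- The number of occurrences of the variable `n` in a term. -/
def count (n : ℕ) : Term F ar → ℕ
  | var m => if m = n then 1 else 0
  | app _ ts => ∑ i, (ts i).count n

/-- A term is linear if no variable occurs twice in it. -/
def Linear (t : Term F ar) : Prop := ∀ n, t.count n ≤ 1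

/-- Applying a substitution to a term. -/
def subst (σ : ℕ → Term F ar) : Term F ar → Term F ar
  | var n => σ n
  | app f ts => app f fun i => (ts i).subst σ

/-- The subterm at a position (a list of argument indices), if the position is valid. -/
def subtermAt : Term F ar → List ℕ → Option (Term F ar)
  | t, [] => some t
  | var _, _ :: _ => none
  | app f ts, i :: p => if h : i < ar f then (ts ⟨i, h⟩).subtermAt p else none

/-- Replacing the subterm at a position, if the position is valid. -/
def replaceAt : Term F ar → List ℕ → Term F ar → Option (Term F ar)
  | _, [], u => some u
  | var _, _ :: _, _ => none
  | app f ts, i :: p, u =>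
      if h : i < ar f then
        ((ts ⟨i, h⟩).replaceAt p u).map fun s => app f (Function.update ts ⟨i, h⟩ s)
      else none

/-- `s.IsSubtermOf t` : `s` is a subterm of `t`. -/
def IsSubtermOf (s t : Term F ar) : Prop := ∃ p, t.subtermAt p = some s

/-- Relabelling of function symbols along an arity-preserving map of signatures. -/
def relabel {G : Type} {arG : G → ℕ} (φ : F → G) (h : ∀ f, arG (φ f) = ar f) :
    Term F ar → Term G arG
  | var n => var n
  | app f ts => app (φ f) fun i => (ts (Fin.cast (h f) i)).relabel φ h

end Term

/-! ## Rewriting -/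

/-- One-step rewriting with a set of rewrite rules: there are a position `p` of `s`,
a rule `(l, r)` and a substitution `σ` with `s|_p = lσ` and `t = s[rσ]_p`. -/
def Rewrites {F : Type} {ar : F → ℕ} (R : Set (Term F ar × Term F ar))
    (s t : Term F ar) : Prop :=
  ∃ (p : List ℕ) (l r : Term F ar) (σ : ℕ → Term F ar),
    (l, r) ∈ R ∧ s.subtermAt p = some (l.subst σ) ∧ s.replaceAt p (r.subst σ) = some t

/-- Many-step rewriting (reflexive–transitive closure). -/
abbrev RewritesStar {F : Type} {ar : F → ℕ} (R : Set (Term F ar × Term F ar)) :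
    Term F ar → Term F ar → Prop :=
  Relation.ReflTransGen (Rewrites R)

/-- A term rewriting system: a finite set of rules whose left-hand sides are not variables. -/
structure TRS (F : Type) (ar : F → ℕ) where
  rules : Set (Term F ar × Term F ar)
  finite : rules.Finite
  lhs_not_var : ∀ lr ∈ rules, ∀ n, lr.1 ≠ Term.var n

namespace TRS

variable {F : Type} {ar : F → ℕ}

def LeftLinear (R : TRS F ar) : Prop := ∀ lr ∈ R.rules, lr.1.Linear

def RightLinear (R : TRS F ar) : Prop := ∀ lr ∈ R.rules, lr.2.Linear

/-- A TRS is linear if all left- and right-hand sides are linear terms. -/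
def IsLinear (R : TRS F ar) : Prop := R.LeftLinear ∧ R.RightLinear

/-- A TRS is growing if every variable occurring both in the left- and the right-hand
side of a rule occurs at depth 1 in the left-hand side. -/
def Growing (R : TRS F ar) : Prop :=
  ∀ lr ∈ R.rules, ∀ n ∈ lr.1.vars, n ∈ lr.2.vars →
    ∀ (f : F) (ts : Fin (ar f) → Term F ar), lr.1 = Term.app f ts →
      ∀ i, n ∈ (ts i).vars → ts i = Term.var n

/-- A redex is an instance of a left-hand side. -/
def IsRedex (R : TRS F ar) (s : Term F ar) : Prop :=
  ∃ lr ∈ R.rules, ∃ σ : ℕ → Term F ar, s = lr.1.subst σ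

/-- `p` is a redex position of `s`. -/
def RedexPos (R : TRS F ar) (s : Term F ar) (p : List ℕ) : Prop :=
  ∃ u, s.subtermAt p = some u ∧ R.IsRedex u

def Reducible (R : TRS F ar) (s : Term F ar) : Prop := ∃ p, R.RedexPos s p

/-- A term is root-stable if it cannot be rewritten to a redex. -/
def RootStable (R : TRS F ar) (s : Term F ar) : Prop :=
  ¬ ∃ t, RewritesStar R.rules s t ∧ R.IsRedex t

/-- Ground normal forms. -/
def NFset (R : TRS F ar) : Set (Term F ar) := { t | t.Ground ∧ ¬ R.Reducible t }

/-- Ground redexes. -/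
def RedexSet (R : TRS F ar) : Set (Term F ar) := { t | t.Ground ∧ R.IsRedex t }

/-- Root-stable ground terms. -/
def RSset (R : TRS F ar) : Set (Term F ar) := { t | t.Ground ∧ R.RootStable t }

/-- Relabelling a TRS along an arity-preserving map of signatures. -/
def relabel {G : Type} {arG : G → ℕ} (R : TRS F ar) (φ : F → G)
    (h : ∀ f, arG (φ f) = ar f) : TRS G arG where
  rules := (fun lr => (lr.1.relabel φ h, lr.2.relabel φ h)) '' R.rules
  finite := R.finite.image _
  lhs_not_var := by
    rintro lr ⟨lr0, h0, rfl⟩ n hn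
    dsimp only at hn
    cases h1 : lr0.1 with
    | var m => exact absurd h1 (R.lhs_not_var lr0 h0 m)
    | app f ts =>
        rw [h1] at hn
        simp only [Term.relabel] at hn
        cases hn

end TRS

/-! ## Tree automata -/

/-- A transition rule `f(q₁,…,qₙ) → q` of a bottom-up tree automaton. -/
abbrev TARule (F : Type) (ar : F → ℕ) (Q : Type) : Type :=
  (f : F) × ((Fin (ar f) → Q) × Q)

/-- A (finite bottom-up) tree automaton without ε-transitions. -/
structure TreeAutomaton (F : Type) (ar : F → ℕ) (Q : Type) where
  trans : Set (TARule F ar Q)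
  final : Set Q

/-- `Reaches Δ t q` : the ground term `t` rewrites to the state `q` using the
transition rules `Δ`. -/
inductive Reaches {F : Type} {ar : F → ℕ} {Q : Type} (Δ : Set (TARule F ar Q)) :
    Term F ar → Q → Prop
  | app {f : F} {ts : Fin (ar f) → Term F ar} {qs : Fin (ar f) → Q} {q : Q} :
      (∀ i, Reaches Δ (ts i) (qs i)) → (⟨f, qs, q⟩ : TARule F ar Q) ∈ Δ →
      Reaches Δ (Term.app f ts) q

/-- `ReachesT Δ θ t q` : the term `t`, whose variables are interpreted as the states
given by `θ`, rewrites to the state `q` using the transition rules `Δ`. -/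
inductive ReachesT {F : Type} {ar : F → ℕ} {Q : Type} (Δ : Set (TARule F ar Q))
    (θ : ℕ → Q) : Term F ar → Q → Prop
  | var (n : ℕ) : ReachesT Δ θ (Term.var n) (θ n)
  | app {f : F} {ts : Fin (ar f) → Term F ar} {qs : Fin (ar f) → Q} {q : Q} :
      (∀ i, ReachesT Δ θ (ts i) (qs i)) → (⟨f, qs, q⟩ : TARule F ar Q) ∈ Δ →
      ReachesT Δ θ (Term.app f ts) q

/-- The language of a tree automaton: all ground terms reaching a final state. -/
def Lang {F : Type} {ar : F → ℕ} {Q : Type} (A : TreeAutomaton F ar Q) :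
    Set (Term F ar) :=
  { t | t.Ground ∧ ∃ q ∈ A.final, Reaches A.trans t q }

/-- A set of ground terms is recognizable if it is the language of some finite
tree automaton. -/
def Recognizable {F : Type} {ar : F → ℕ} (T : Set (Term F ar)) : Prop :=
  ∃ (Q : Type) (_ : Fintype Q) (A : TreeAutomaton F ar Q), T = Lang A

/-- The set of states occurring in a set of transition rules. -/
def statesOf {F : Type} {ar : F → ℕ} {Q : Type} (Γ : Set (TARule F ar Q)) : Set Q :=
  { q | ∃ ρ ∈ Γ, ρ.2.2 = q ∨ ∃ i, ρ.2.1 i = q }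

/-! ## The automaton `ℬ(ℛ)` -/

/-- The canonical representative of the state `⟨t⟩` of `ℬ(ℛ)`: all variables are
identified with the single state `⟨x⟩`, represented by `var 0`. -/
def stPattern {F : Type} {ar : F → ℕ} : Term F ar → Term F ar
  | Term.var _ => Term.var 0
  | Term.app f ts => Term.app f ts

/-- `S_ℛ`: the set of all subterms of arguments of left-hand sides of `ℛ`. -/
def SR {F : Type} {ar : F → ℕ} (R : TRS F ar) : Set (Term F ar) :=
  { s | ∃ lr ∈ R.rules, ∃ (f : F) (ts : Fin (ar f) → Term F ar),
        lr.1 = Term.app f ts ∧ ∃ i, s.IsSubtermOf (ts i) }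

/-- The representatives of the states of `ℬ(ℛ)`: the patterns of terms of `S_ℛ`,
together with `⟨x⟩`. -/
def BStateSet {F : Type} {ar : F → ℕ} (R : TRS F ar) : Set (Term F ar) :=
  stPattern '' SR R ∪ {Term.var 0}

/-- The matching rules of `ℬ(ℛ)` (with states encoded by `enc`):
`f(⟨t₁⟩,…,⟨tₙ⟩) → ⟨t⟩` for every `t = f(t₁,…,tₙ) ∈ S_ℛ`. -/
def BMatch {F : Type} {ar : F → ℕ} {Q : Type} (R : TRS F ar) (enc : Term F ar → Q) :
    Set (TARule F ar Q) :=
  { ρ | ∃ (f : F) (ts : Fin (ar f) → Term F ar), Term.app f ts ∈ SR R ∧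
        ρ = ⟨f, fun i => enc (stPattern (ts i)), enc (Term.app f ts)⟩ }

/-- The propagation rules `f(⟨x⟩,…,⟨x⟩) → ⟨x⟩` for every function symbol `f`. -/
def BProp {F : Type} {ar : F → ℕ} {Q : Type} (enc : Term F ar → Q) :
    Set (TARule F ar Q) :=
  { ρ | ∃ f : F, ρ = ⟨f, fun _ => enc (Term.var 0), enc (Term.var 0)⟩ }

/-- The transition rules of the automaton `ℬ(ℛ)`. -/
def BTrans {F : Type} {ar : F → ℕ} {Q : Type} (R : TRS F ar) (enc : Term F ar → Q) :
    Set (TARule F ar Q) :=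
  BMatch R enc ∪ BProp enc

/-- `Σ(t)`: the set of ground instances of the term `t`. -/
def GInst {F : Type} {ar : F → ℕ} (t : Term F ar) : Set (Term F ar) :=
  { s | s.Ground ∧ ∃ σ, s = t.subst σ }

/-! ## Saturation -/

/-- The state `qᵢ` associated to the argument `lᵢ` of a left-hand side in the
saturation rule: `lᵢθ` if `lᵢ` is a variable occurring in `r` (whose variable set
is `rv`), and `⟨lᵢ⟩` otherwise. -/
def satArg {F : Type} {ar : F → ℕ} {Q : Type} (enc : Term F ar → Q) (θ : ℕ → Q)
    (rv : Finset ℕ) : Term F ar → Q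
  | Term.var n => if n ∈ rv then θ n else enc (Term.var 0)
  | Term.app f ts => enc (Term.app f ts)

/-- One step of the saturation process: add all transition rules `f(q₁,…,qₙ) → q`
obtained from a rewrite rule `f(l₁,…,lₙ) → r` and a state substitution `θ`
(with values among the states `Qc` of the automaton) such that `rθ →_Γ* q`. -/
def satStep {F : Type} {ar : F → ℕ} {Q : Type} (R : TRS F ar) (enc : Term F ar → Q)
    (Qc : Set Q) (Γ : Set (TARule F ar Q)) : Set (TARule F ar Q) :=
  Γ ∪ { ρ | ∃ (f : F) (ls : Fin (ar f) → Term F ar) (r : Term F ar) (θ : ℕ → Q) (q : Q),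
        (Term.app f ls, r) ∈ R.rules ∧ (∀ n ∈ r.vars, θ n ∈ Qc) ∧ ReachesT Γ θ r q ∧
        ρ = ⟨f, fun i => satArg enc θ r.vars (ls i), q⟩ }

/-- The saturated set of transition rules: the closure of `Γ0` under the saturation
inference rule. -/
def satGamma {F : Type} {ar : F → ℕ} {Q : Type} (R : TRS F ar) (enc : Term F ar → Q)
    (Qc : Set Q) (Γ0 : Set (TARule F ar Q)) : Set (TARule F ar Q) :=
  ⋃ n, (satStep R enc Qc)^[n] Γ0

/-! ## The automaton `𝒞_T(ℛ)` and its extension `𝒞'_T(ℛ)` -/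

/-- The data of the construction of the automaton `𝒞_T(ℛ)`: an automaton `𝒜_T`
recognizing `T` with all states accessible and state set `QA`, together with an
encoding `enc` of the states `⟨t⟩` of `ℬ(ℛ)` into the common state type `Q`, such
that every state common to `𝒜_T` and `ℬ(ℛ)` accepts the same set of terms in both
automata. -/
structure CSetup {G : Type} [Fintype G] {arG : G → ℕ} (Q : Type) [Fintype Q]
    (Rg : TRS G arG) (T : Set (Term G arG)) where
  enc : Term G arG → Q
  A : TreeAutomaton G arG Q
  QA : Set Q
  henc : Set.InjOn enc (BStateSet Rg)
  hAstates : ∀ ρ ∈ A.trans, ρ.2.2 ∈ QA ∧ ∀ i, ρ.2.1 i ∈ QA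
  hfinal : A.final ⊆ QA
  hacc : ∀ q ∈ QA, ∃ s : Term G arG, s.Ground ∧ Reaches A.trans s q
  hground : ∃ s : Term G arG, s.Ground
  hshared : ∀ q ∈ QA ∩ enc '' BStateSet Rg, ∀ s : Term G arG,
      Reaches A.trans s q ↔ Reaches (BTrans Rg enc) s q
  hT : T = Lang A

namespace CSetup

variable {G : Type} [Fintype G] {arG : G → ℕ} {Q : Type} [Fintype Q]
  {Rg : TRS G arG} {T : Set (Term G arG)}

/-- The set of states of the automaton `𝒞_T(ℛ)`. -/
def Qstates (C : CSetup Q Rg T) : Set Q := C.QA ∪ C.enc '' BStateSet Rg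

/-- The transition rules of `𝒞_T(ℛ)` before saturation: the union of `𝒜_T` and `ℬ(ℛ)`. -/
def Γ0 (C : CSetup Q Rg T) : Set (TARule G arG Q) := C.A.trans ∪ BTrans Rg C.enc

/-- The transition rules of `𝒞_T(ℛ)` after saturation. -/
def Γsat (C : CSetup Q Rg T) : Set (TARule G arG Q) :=
  satGamma Rg C.enc C.Qstates C.Γ0

end CSetup

/-- The redex rules `f(⟪l₁⟫,…,⟪lₙ⟫) → q_r` for every left-hand side `f(l₁,…,lₙ)`. -/
def RedexRules {F : Type} {ar : F → ℕ} {Q : Type} (R : TRS F ar)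
    (enc2 : Term F ar → Q) (qr : Q) : Set (TARule F ar Q) :=
  { ρ | ∃ (f : F) (ls : Fin (ar f) → Term F ar) (r : Term F ar),
        (Term.app f ls, r) ∈ R.rules ∧
        ρ = ⟨f, fun i => enc2 (stPattern (ls i)), qr⟩ }

/-- The rules `f(⟨x⟩,…,q_r,…,⟨x⟩) → q_r`. -/
def QrProp {F : Type} {ar : F → ℕ} {Q : Type} (enc : Term F ar → Q) (qr : Q) :
    Set (TARule F ar Q) :=
  { ρ | ∃ (f : F) (j : Fin (ar f)),
        ρ = ⟨f, fun i => if i = j then qr else enc (Term.var 0), qr⟩ }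

/-- The data of the construction of the automaton `𝒞'_T(ℛ)`: `𝒞_T(ℛ)` extended with
a fresh copy `⟪t⟫` (encoded by `enc2`, with `⟪x⟫ = ⟨x⟩`) of the states of `ℬ(ℛ)` and
a fresh state `q_r`. -/
structure CpSetup {G : Type} [Fintype G] {arG : G → ℕ} (Q : Type) [Fintype Q]
    (Rg : TRS G arG) (T : Set (Term G arG)) extends CSetup Q Rg T where
  enc2 : Term G arG → Q
  qr : Q
  henc2 : Set.InjOn enc2 (BStateSet Rg)
  hx : enc2 (Term.var 0) = enc (Term.var 0)
  hfresh : (enc2 '' (BStateSet Rg \ {Term.var 0}) ∪ {qr}) ∩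
              (QA ∪ enc '' BStateSet Rg) = ∅
  hqr : qr ∉ enc2 '' (BStateSet Rg \ {Term.var 0})

namespace CpSetup

variable {G : Type} [Fintype G] {arG : G → ℕ} {Q : Type} [Fintype Q]
  {Rg : TRS G arG} {T : Set (Term G arG)}

/-- The transition rules `Γ'` of the automaton `𝒞'_T(ℛ)`. -/
def Γ' (C : CpSetup Q Rg T) : Set (TARule G arG Q) :=
  C.toCSetup.Γsat ∪ BMatch Rg C.enc2 ∪ RedexRules Rg C.enc2 C.qr ∪ QrProp C.enc C.qr

end CpSetup

/-! ## The signature `𝓖 = 𝓕 ∪ {•}` -/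

/-- The arity function of the extended signature `𝓕 ∪ {•}` (with `•` the fresh
constant `none`). -/
def arB {F : Type} (ar : F → ℕ) : Option F → ℕ
  | none => 0
  | some f => ar f

/-- The term `•`. -/
def bulletTm {F : Type} {ar : F → ℕ} : Term (Option F) (arB ar) :=
  Term.app none Fin.elim0

/-- The embedding of `𝒯(𝓕)`-terms into terms over `𝓕 ∪ {•}`. -/
def liftB {F : Type} {ar : F → ℕ} : Term F ar → Term (Option F) (arB ar) :=
  Term.relabel some (fun _ => rfl)

/-- A TRS over `𝓕` viewed as a TRS over `𝓕 ∪ {•}`. -/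
def TRS.liftB {F : Type} {ar : F → ℕ} (R : TRS F ar) : TRS (Option F) (arB ar) :=
  R.relabel some (fun _ => rfl)

/-- The TRS `ℛ• = ℛ ∪ {• → •}` over the signature `𝓕 ∪ {•}`. -/
def TRS.bullet {F : Type} {ar : F → ℕ} (R : TRS F ar) : TRS (Option F) (arB ar) where
  rules := R.liftB.rules ∪ {(bulletTm, bulletTm)}
  finite := R.liftB.finite.union (Set.finite_singleton _)
  lhs_not_var := by
    rintro lr (h | h) n hn
    · exact R.liftB.lhs_not_var lr h n hn
    · rw [Set.mem_singleton_iff] at h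
      rw [h] at hn
      cases hn

/-! ## The automaton `𝒟(ℛ)` -/

/-- For a symbol `g` and sets of states `Ss` for the arguments, the set
`g(S₁,…,Sₙ)↓` of states reachable from `g` applied to states chosen from the `Ssᵢ`. -/
def oneStep {G : Type} {arG : G → ℕ} {Q : Type} (Γ : Set (TARule G arG Q)) (g : G)
    (Ss : Fin (arG g) → Set Q) : Set Q :=
  { q | ∃ qs : Fin (arG g) → Q, (∀ i, qs i ∈ Ss i) ∧ (⟨g, qs, q⟩ : TARule G arG Q) ∈ Γ }

/-- `t↓` for a ground term `t`: the set of states reachable from `t`. -/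
def dn {G : Type} {arG : G → ℕ} {Q : Type} (Γ : Set (TARule G arG Q))
    (t : Term G arG) : Set Q :=
  { q | Reaches Γ t q }

/-- There is a rewrite rule with left-hand side `g(l₁,…,lₙ)` such that
`⟪lᵢ⟫ ∈ Ssᵢ` for all `i`. -/
def LhsMatch {G : Type} {arG : G → ℕ} {Q : Type} (Rg : TRS G arG)
    (enc2 : Term G arG → Q) (g : G) (Ss : Fin (arG g) → Set Q) : Prop :=
  ∃ (ls : Fin (arG g) → Term G arG) (r : Term G arG),
    (Term.app g ls, r) ∈ Rg.rules ∧ ∀ i, enc2 (stPattern (ls i)) ∈ Ss i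

/-- The transition rules of the automaton `𝒟(ℛ)` over `𝓕`, built from the transition
rules `Γ'` of `𝒞'_{NF}(ℛ)` over `𝓕 ∪ {•}`. -/
def DTrans {F : Type} {ar : F → ℕ} {Q : Type} (Rb : TRS (Option F) (arB ar))
    (Γ' : Set (TARule (Option F) (arB ar) Q))
    (enc enc2 : Term (Option F) (arB ar) → Q) :
    Set (TARule F ar (Set Q × Set Q)) :=
  { ρ | ∃ (f : F) (SP : Fin (ar f) → Set Q × Set Q) (P1 P2 : Set Q),
      P1 ⊆ (⋃ i : Fin (ar f), oneStep Γ' (some f)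
              (fun j => @ite _ (j = i) (instDecidableEqFin _ j i) (SP j).2 (SP j).1)) ∧
      (∀ (i : Fin (ar f)), ∀ q ∈ (SP i).2,
        (P1 ∩ oneStep Γ' (some f) (fun j => @ite _ (j = i) (instDecidableEqFin _ j i) {q} (SP j).1)).Nonempty) ∧
      ((LhsMatch Rb enc2 (some f) (fun i => (SP i).1) ∧ P2 = {enc (Term.var 0)}) ∨
       (¬ LhsMatch Rb enc2 (some f) (fun i => (SP i).1) ∧ P2 = (∅ : Set Q))) ∧
      ρ = ⟨f, SP, (oneStep Γ' (some f) (fun i => (SP i).1), P1 ∪ P2)⟩ }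

/-- The automaton `𝒟(ℛ)`: final states are the pairs `[S,P]` with `q_r ∈ S` and
`P ⊆ Q_f`. -/
def DAutomaton {F : Type} {ar : F → ℕ} {Q : Type} (Rb : TRS (Option F) (arB ar))
    (Γ' : Set (TARule (Option F) (arB ar) Q))
    (enc enc2 : Term (Option F) (arB ar) → Q) (qr : Q) (Qf : Set Q) :
    TreeAutomaton F ar (Set Q × Set Q) where
  trans := DTrans Rb Γ' enc enc2
  final := { SP | qr ∈ SP.1 ∧ SP.2 ⊆ Qf }

/-! ## Growing approximations -/

/-- `VarRepl t t'` : `t'` is obtained from `t` by replacing occurrences of variables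
by (possibly other) variables. -/
inductive VarRepl {F : Type} {ar : F → ℕ} : Term F ar → Term F ar → Prop
  | var (n m : ℕ) : VarRepl (Term.var n) (Term.var m)
  | app (f : F) (ts ts' : Fin (ar f) → Term F ar) :
      (∀ i, VarRepl (ts i) (ts' i)) → VarRepl (Term.app f ts) (Term.app f ts')

/-- `Rg` is a growing approximation of `R`: a right-linear growing TRS obtained from
`R` by replacing, in each right-hand side, occurrences of variables by variables not
occurring in the corresponding left-hand side. -/
def IsGrowingApprox {F : Type} {ar : F → ℕ} (R Rg : TRS F ar) : Prop :=
  Rg.RightLinear ∧ Rg.Growing ∧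
  (∀ lr ∈ Rg.rules, ∃ lr' ∈ R.rules, lr.1 = lr'.1 ∧ VarRepl lr'.2 lr.2 ∧
      ∀ n ∈ lr.2.vars, n ∉ lr.1.vars) ∧
  (∀ lr ∈ R.rules, ∃ lr' ∈ Rg.rules, lr.1 = lr'.1 ∧ VarRepl lr.2 lr'.2 ∧
      ∀ n ∈ lr'.2.vars, n ∉ lr'.1.vars)

/-! ## The signature `𝓖 = 𝓕 ∪ {f° : f ∈ 𝓕}` -/

/-- The arity function of the signature `𝓕 ∪ {f° : f ∈ 𝓕}` (`inl f` is `f`,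
`inr f` is `f°`). -/
def arC {F : Type} (ar : F → ℕ) : F ⊕ F → ℕ
  | Sum.inl f => ar f
  | Sum.inr f => ar f

/-- The embedding of `𝒯(𝓕)`-terms into terms over `𝓕 ∪ {f° : f ∈ 𝓕}`. -/
def liftC {F : Type} {ar : F → ℕ} : Term F ar → Term (F ⊕ F) (arC ar) :=
  Term.relabel Sum.inl (fun _ => rfl)

/-- `t°`: mark the root symbol of `t`. -/
def circTm {F : Type} {ar : F → ℕ} : Term F ar → Term (F ⊕ F) (arC ar)
  | Term.var n => Term.var n
  | Term.app f ts => Term.app (Sum.inr f) fun i => liftC (ts i)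

/-- A TRS over `𝓕` viewed as a TRS over `𝓕 ∪ {f° : f ∈ 𝓕}`. -/
def TRS.liftC {F : Type} {ar : F → ℕ} (R : TRS F ar) : TRS (F ⊕ F) (arC ar) :=
  R.relabel Sum.inl (fun _ => rfl)

/-- The TRS `𝒮° = 𝒮 ∪ {l° → r | l → r ∈ 𝒮}` over the signature `𝓕 ∪ {f° : f ∈ 𝓕}`. -/
def TRS.circ {F : Type} {ar : F → ℕ} (S : TRS F ar) : TRS (F ⊕ F) (arC ar) where
  rules := S.liftC.rules ∪ (fun lr => (circTm lr.1, _root_.liftC lr.2)) '' S.rules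
  finite := S.liftC.finite.union (S.finite.image _)
  lhs_not_var := by
    rintro lr (h | ⟨lr0, h0, rfl⟩) n hn
    · exact S.liftC.lhs_not_var lr h n hn
    · dsimp only at hn
      cases h1 : lr0.1 with
      | var m => exact absurd h1 (S.lhs_not_var lr0 h0 m)
      | app f ts =>
          rw [h1] at hn
          simp only [circTm] at hn
          cases hn

/-- The transitions added to `ℬ(𝒮°)` to obtain `𝒜_{REDEX_{𝒮°}}`:
`f(⟨l₁⟩,…,⟨lₙ⟩) → q_f` and `f°(⟨l₁⟩,…,⟨lₙ⟩) → q_f` for each left-hand side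
`f(l₁,…,lₙ)` of a rule of `𝒮`. -/
def CircRedexRules {F : Type} {ar : F → ℕ} {Q : Type} (S : TRS F ar)
    (enc : Term (F ⊕ F) (arC ar) → Q) (qf : Q) : Set (TARule (F ⊕ F) (arC ar) Q) :=
  { ρ | ∃ (f : F) (ls : Fin (ar f) → Term F ar) (r : Term F ar),
      (Term.app f ls, r) ∈ S.rules ∧
      (ρ = ⟨Sum.inl f, fun i => enc (stPattern (liftC (ls i))), qf⟩ ∨
       ρ = ⟨Sum.inr f, fun i => enc (stPattern (liftC (ls i))), qf⟩) }

/-! ## The automaton `𝒟'(ℛ,𝒮)` -/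

/-- The data of the construction of `𝒞'_{RS_{𝒮°}}(ℛ)`: the saturated automaton
`𝒞_{RS_{𝒮°}}(ℛ)`, a fresh copy `⟪t⟫` (encoded by `enc2`, with `⟪x⟫ = ⟨x⟩`) of the
states of `ℬ(ℛ)`, and an automaton `𝒞_{REDEX_𝒮}(𝒮)` (transitions `Etrans`, final
states `Qf'`) recognizing the non-`𝒮`-root-stable ground terms of `𝒯(𝓕)`. -/
structure CrsSetup {F : Type} [Fintype F] {ar : F → ℕ} (Q : Type) [Fintype Q]
    (R S : TRS F ar) extends CSetup Q R.liftC (TRS.RSset S.circ) where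
  enc2 : Term (F ⊕ F) (arC ar) → Q
  henc2 : Set.InjOn enc2 (BStateSet R.liftC)
  hx : enc2 (Term.var 0) = enc (Term.var 0)
  hfresh2 : (enc2 '' (BStateSet R.liftC \ {Term.var 0})) ∩
              (QA ∪ enc '' BStateSet R.liftC) = ∅
  Etrans : Set (TARule (F ⊕ F) (arC ar) Q)
  Qf' : Set Q
  hQf' : Qf' ⊆ statesOf Etrans
  hEfresh : statesOf Etrans ∩
      (QA ∪ enc '' BStateSet R.liftC ∪ enc2 '' (BStateSet R.liftC \ {Term.var 0})) = ∅
  hE : ∀ t : Term (F ⊕ F) (arC ar),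
      (t.Ground ∧ ∃ q ∈ Qf', Reaches Etrans t q) ↔
      (∃ s : Term F ar, t = liftC s ∧ s.Ground ∧ ¬ S.RootStable s)

namespace CrsSetup

variable {F : Type} [Fintype F] {ar : F → ℕ} {Q : Type} [Fintype Q] {R S : TRS F ar}

/-- The transition rules `Γ'` of the automaton `𝒞'_{RS_{𝒮°}}(ℛ)`. -/
def Γ' (C : CrsSetup Q R S) : Set (TARule (F ⊕ F) (arC ar) Q) :=
  C.toCSetup.Γsat ∪ BMatch R.liftC C.enc2 ∪ C.Etrans

end CrsSetup

/-- The transition rules of the automaton `𝒟'(ℛ,𝒮)` over `𝓕`, built from the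
transition rules `Γ'` of `𝒞'_{RS_{𝒮°}}(ℛ)`. -/
def DTransRS {F : Type} {ar : F → ℕ} {Q : Type} (Rg : TRS (F ⊕ F) (arC ar))
    (Γ' : Set (TARule (F ⊕ F) (arC ar) Q)) (enc2 : Term (F ⊕ F) (arC ar) → Q) :
    Set (TARule F ar (Set Q × Set Q)) :=
  { ρ | ∃ (f : F) (SP : Fin (ar f) → Set Q × Set Q) (P1 P2 : Set Q),
      P1 ⊆ (⋃ i : Fin (ar f), oneStep Γ' (Sum.inl f)
              (fun j => @ite _ (j = i) (instDecidableEqFin _ j i) (SP j).2 (SP j).1)) ∧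
      (∀ (i : Fin (ar f)), ∀ q ∈ (SP i).2,
        (P1 ∩ oneStep Γ' (Sum.inl f) (fun j => @ite _ (j = i) (instDecidableEqFin _ j i) {q} (SP j).1)).Nonempty) ∧
      ((LhsMatch Rg enc2 (Sum.inl f) (fun i => (SP i).1) ∧ P2.Nonempty ∧
          P2 ⊆ oneStep Γ' (Sum.inr f) (fun i => (SP i).1)) ∨
       (¬ LhsMatch Rg enc2 (Sum.inl f) (fun i => (SP i).1) ∧ P2 = (∅ : Set Q))) ∧
      ρ = ⟨f, SP, (oneStep Γ' (Sum.inl f) (fun i => (SP i).1), P1 ∪ P2)⟩ }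

/-- The automaton `𝒟'(ℛ,𝒮)`: final states are the pairs `[S,P]` with
`S ∩ Q_f' ≠ ∅` and `P ⊆ Q_f`. -/
def DAutomatonRS {F : Type} {ar : F → ℕ} {Q : Type} (Rg : TRS (F ⊕ F) (arC ar))
    (Γ' : Set (TARule (F ⊕ F) (arC ar) Q)) (enc2 : Term (F ⊕ F) (arC ar) → Q)
    (Qf' Qf : Set Q) : TreeAutomaton F ar (Set Q × Set Q) where
  trans := DTransRS Rg Γ' enc2
  final := { SP | (SP.1 ∩ Qf').Nonempty ∧ SP.2 ⊆ Qf }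

/-!
The states `⟪t⟫` (for `t` not a variable) and `q_r` do not occur in `𝒞_T(ℛ)`, so a run of `Γ'`
into `⟪t⟫` must end with a rule `f(⟪t₁⟫,…,⟪tₙ⟫) → ⟪t⟫`; by injectivity of the encoding and
linearity of `t`, a ground term reaches `⟪t⟫` exactly when it is an instance of `t`. A run into
`q_r` ends either with a rule `f(⟪l₁⟫,…,⟪lₙ⟫) → q_r`, and then the term is an instance of the
left-hand side `f(l₁,…,lₙ)`, or with a propagation rule from an argument reaching `q_r`;
conversely a redex reaches `q_r` and `q_r` propagates to the root since every ground term
reaches `⟨x⟩`. Finally, all new rules lead to fresh states, so a run ending in a state of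
`𝒞_T(ℛ)`, in particular in a final state, uses only rules of `𝒞_T(ℛ)`.
-/

namespace Term

variable {F : Type} {ar : F → ℕ}

theorem ground_app_iff {f : F} {ts : Fin (ar f) → Term F ar} :
    (app f ts).Ground ↔ ∀ i, (ts i).Ground := by
  simp only [Ground, vars, Finset.eq_empty_iff_forall_notMem, Finset.mem_biUnion,
    Finset.mem_univ, true_and, not_exists]
  exact forall_comm

@[simp]
theorem subtermAt_nil (t : Term F ar) : t.subtermAt [] = some t := by
  cases t <;> rfl

theorem not_ground_var (n : ℕ) : ¬ (var n : Term F ar).Ground :=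
  Finset.singleton_ne_empty n

theorem count_pos_of_mem_vars {n : ℕ} {t : Term F ar} (h : n ∈ t.vars) : 0 < t.count n := by
  induction t with
  | var m =>
    obtain rfl := Finset.mem_singleton.mp h
    simp [count]
  | app f ts ih =>
    obtain ⟨i, -, hi⟩ := Finset.mem_biUnion.mp h
    exact Finset.sum_pos' (fun _ _ => Nat.zero_le _) ⟨i, Finset.mem_univ i, ih i hi⟩

theorem Linear.arg {f : F} {ts : Fin (ar f) → Term F ar} (h : (app f ts).Linear)
    (i : Fin (ar f)) : (ts i).Linear := fun n =>
  (Finset.single_le_sum (f := fun j => (ts j).count n) (fun _ _ => Nat.zero_le _)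
    (Finset.mem_univ i)).trans (h n)

theorem Linear.disjoint_vars {f : F} {ts : Fin (ar f) → Term F ar} (h : (app f ts).Linear)
    {i j : Fin (ar f)} (hij : i ≠ j) : Disjoint (ts i).vars (ts j).vars := by
  refine Finset.disjoint_left.mpr fun n hi hj => ?_
  have hsum : (ts i).count n + (ts j).count n ≤ ∑ k, (ts k).count n := by
    rw [← Finset.sum_pair (f := fun k => (ts k).count n) hij]
    exact Finset.sum_le_sum_of_subset (Finset.subset_univ _)
  have := h n
  have := count_pos_of_mem_vars hi
  have := count_pos_of_mem_vars hj
  simp only [count] at *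
  omega

theorem subst_congr {σ σ' : ℕ → Term F ar} {t : Term F ar}
    (h : ∀ n ∈ t.vars, σ n = σ' n) : t.subst σ = t.subst σ' := by
  induction t with
  | var n => exact h n (Finset.mem_singleton_self n)
  | app f ts ih =>
    exact congrArg _ (funext fun i => ih i fun n hn =>
      h n (Finset.mem_biUnion.mpr ⟨i, Finset.mem_univ i, hn⟩))

theorem exists_subst_app_of_linear {f : F} {ps ts : Fin (ar f) → Term F ar}
    (hlin : (app f ps).Linear) (h : ∀ i, ∃ σ, ts i = (ps i).subst σ) :
    ∃ σ, app f ts = (app f ps).subst σ := by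
  classical
  choose σs hσs using h
  refine ⟨fun n => if h : ∃ i, n ∈ (ps i).vars then σs h.choose n else var n,
    congrArg _ (funext fun i => (hσs i).trans (subst_congr fun n hn => ?_))⟩
  have hex : ∃ j, n ∈ (ps j).vars := ⟨i, hn⟩
  rw [dif_pos hex]
  by_cases hci : hex.choose = i
  · rw [hci]
  · exact absurd hn (Finset.disjoint_left.mp (hlin.disjoint_vars hci) hex.choose_spec)

theorem subtermAt_append {p q : List ℕ} :
    ∀ {t u : Term F ar}, t.subtermAt p = some u → t.subtermAt (p ++ q) = u.subtermAt q := by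
  induction p with
  | nil =>
    intro t u h
    cases t <;> cases h <;> rfl
  | cons i p ih =>
    intro t u h
    cases t with
    | var n => cases h
    | app f ts =>
      simp only [subtermAt] at h
      split at h
      · next hlt => simpa [subtermAt, hlt] using ih h
      · cases h

theorem IsSubtermOf.trans {s t u : Term F ar} (hst : s.IsSubtermOf t) (htu : t.IsSubtermOf u) :
    s.IsSubtermOf u := by
  obtain ⟨p, hp⟩ := hst
  obtain ⟨q, hq⟩ := htu
  exact ⟨q ++ p, (subtermAt_append hq).trans hp⟩

theorem arg_isSubtermOf {f : F} {ts : Fin (ar f) → Term F ar} (i : Fin (ar f)) :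
    (ts i).IsSubtermOf (app f ts) :=
  ⟨[(i : ℕ)], by simp [subtermAt, i.isLt]⟩

end Term

namespace TRS

variable {F : Type} {ar : F → ℕ}

theorem reducible_app_iff {R : TRS F ar} {f : F} {ts : Fin (ar f) → Term F ar} :
    R.Reducible (Term.app f ts) ↔ R.IsRedex (Term.app f ts) ∨ ∃ i, R.Reducible (ts i) := by
  constructor
  · rintro ⟨_ | ⟨i, p⟩, u, hu, hred⟩
    · cases hu
      exact Or.inl hred
    · simp only [Term.subtermAt] at hu
      split at hu
      · next hlt => exact Or.inr ⟨⟨i, hlt⟩, p, u, hu, hred⟩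
      · cases hu
  · rintro (hred | ⟨i, p, u, hu, hred⟩)
    · exact ⟨[], _, rfl, hred⟩
    · exact ⟨(i : ℕ) :: p, u, by simpa [Term.subtermAt, i.isLt] using hu, hred⟩

end TRS

section SR

variable {F : Type} {ar : F → ℕ} {R : TRS F ar}

theorem arg_mem_SR {f : F} {ts : Fin (ar f) → Term F ar} (h : Term.app f ts ∈ SR R)
    (i : Fin (ar f)) : ts i ∈ SR R := by
  obtain ⟨lr, hlr, g, ls, heq, j, hsub⟩ := h
  exact ⟨lr, hlr, g, ls, heq, j, (Term.arg_isSubtermOf i).trans hsub⟩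

theorem lhs_arg_mem_SR {f : F} {ls : Fin (ar f) → Term F ar} {r : Term F ar}
    (h : (Term.app f ls, r) ∈ R.rules) (i : Fin (ar f)) : ls i ∈ SR R :=
  ⟨_, h, f, ls, rfl, i, [], Term.subtermAt_nil _⟩

theorem stPattern_mem_BStateSet {t : Term F ar} (h : t ∈ SR R) : stPattern t ∈ BStateSet R := by
  cases t with
  | var n => exact Or.inr rfl
  | app f ts => exact Or.inl ⟨_, h, rfl⟩

end SR

section Automata

variable {F : Type} {ar : F → ℕ} {Q : Type}

theorem statesOf_subset_iff {Γ : Set (TARule F ar Q)} {P : Set Q} :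
    statesOf Γ ⊆ P ↔ ∀ ρ ∈ Γ, ρ.2.2 ∈ P ∧ ∀ i, ρ.2.1 i ∈ P := by
  constructor
  · exact fun h ρ hρ => ⟨h ⟨ρ, hρ, Or.inl rfl⟩, fun i => h ⟨ρ, hρ, Or.inr ⟨i, rfl⟩⟩⟩
  · rintro h q ⟨ρ, hρ, rfl | ⟨i, rfl⟩⟩
    exacts [(h ρ hρ).1, (h ρ hρ).2 i]

theorem Reaches.mono {Δ Δ' : Set (TARule F ar Q)} (hsub : Δ ⊆ Δ') {t : Term F ar} {q : Q}
    (h : Reaches Δ t q) : Reaches Δ' t q := by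
  induction h with
  | app _ hρ ih => exact Reaches.app ih (hsub hρ)

theorem Reaches.restrict {Δ Δ' : Set (TARule F ar Q)} {P : Set Q} (hΔ : statesOf Δ ⊆ P)
    (hΔ' : ∀ ρ ∈ Δ', ρ.2.2 ∈ P → ρ ∈ Δ) {t : Term F ar} {q : Q}
    (h : Reaches Δ' t q) (hq : q ∈ P) : Reaches Δ t q := by
  induction h with
  | app _ hρ ih =>
    have hρ := hΔ' _ hρ hq
    exact Reaches.app (fun i => ih i ((statesOf_subset_iff.mp hΔ _ hρ).2 i)) hρ

theorem reaches_var0_of_ground {Δ : Set (TARule F ar Q)} {enc : Term F ar → Q}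
    (hsub : BProp enc ⊆ Δ) {s : Term F ar} (hs : s.Ground) : Reaches Δ s (enc (Term.var 0)) := by
  induction s with
  | var n => exact absurd hs (Term.not_ground_var n)
  | app f ts ih => exact Reaches.app (fun i => ih i (Term.ground_app_iff.mp hs i)) (hsub ⟨f, rfl⟩)

theorem statesOf_satGamma {R : TRS F ar} {enc : Term F ar → Q} {P : Set Q}
    {Γ0 : Set (TARule F ar Q)} (h0 : statesOf Γ0 ⊆ P) (henc : enc '' BStateSet R ⊆ P) :
    statesOf (satGamma R enc P Γ0) ⊆ P := by
  have hstep : ∀ n, statesOf ((satStep R enc P)^[n] Γ0) ⊆ P := by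
    intro n
    induction n with
    | zero => exact h0
    | succ n ih =>
      rw [Function.iterate_succ_apply', statesOf_subset_iff]
      rintro ρ (hρ | ⟨f, ls, r, θ, q, hrule, hθ, hreach, rfl⟩)
      · exact statesOf_subset_iff.mp ih ρ hρ
      refine ⟨?_, fun i => ?_⟩
      · cases hreach with
        | var n => exact hθ n (Finset.mem_singleton_self n)
        | app _ hρ => exact (statesOf_subset_iff.mp ih _ hρ).1
      · show satArg enc θ r.vars (ls i) ∈ P
        cases hli : ls i with
        | var m =>
          simp only [satArg]
          split
          · next hm => exact hθ m hm
          · exact henc ⟨_, Or.inr rfl, rfl⟩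
        | app g us => exact henc ⟨_, Or.inl ⟨_, hli ▸ lhs_arg_mem_SR hrule i, rfl⟩, rfl⟩
  rintro q ⟨ρ, hρ, hq⟩
  obtain ⟨n, hn⟩ := Set.mem_iUnion.mp hρ
  exact hstep n ⟨ρ, hn, hq⟩

end Automata

namespace CSetup

variable {F : Type} [Fintype F] {ar : F → ℕ} {Q : Type} [Fintype Q] {R : TRS F ar}
  {T : Set (Term F ar)}

theorem statesOf_Γsat (C : CSetup Q R T) : statesOf C.Γsat ⊆ C.Qstates := by
  refine statesOf_satGamma (statesOf_subset_iff.mpr ?_) Set.subset_union_right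
  rintro ρ (hρ | (⟨f, ts, hSR, rfl⟩ | ⟨f, rfl⟩))
  · exact ⟨Or.inl (C.hAstates ρ hρ).1, fun i => Or.inl ((C.hAstates ρ hρ).2 i)⟩
  · exact ⟨Or.inr ⟨_, Or.inl ⟨_, hSR, rfl⟩, rfl⟩,
      fun i => Or.inr ⟨_, stPattern_mem_BStateSet (arg_mem_SR hSR i), rfl⟩⟩
  · exact ⟨Or.inr ⟨_, Or.inr rfl, rfl⟩, fun _ => Or.inr ⟨_, Or.inr rfl, rfl⟩⟩

theorem BProp_subset_Γsat (C : CSetup Q R T) : BProp C.enc ⊆ C.Γsat :=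
  fun _ hρ => Set.mem_iUnion.mpr ⟨0, Or.inr (Or.inr hρ)⟩

end CSetup

namespace CpSetup

variable {F : Type} [Fintype F] {ar : F → ℕ} {Q : Type} [Fintype Q] {R : TRS F ar}
  {T : Set (Term F ar)} (C : CpSetup Q R T)

theorem disjoint_fresh_Qstates :
    Disjoint (C.enc2 '' (BStateSet R \ {Term.var 0}) ∪ {C.qr}) C.Qstates :=
  Set.disjoint_iff_inter_eq_empty.mpr C.hfresh

theorem qr_notMem_Qstates : C.qr ∉ C.Qstates :=
  C.disjoint_fresh_Qstates.notMem_of_mem_left (Or.inr rfl)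

theorem enc2_app_notMem_Qstates {f : F} {ts : Fin (ar f) → Term F ar}
    (h : Term.app f ts ∈ SR R) : C.enc2 (Term.app f ts) ∉ C.Qstates :=
  C.disjoint_fresh_Qstates.notMem_of_mem_left
    (Or.inl ⟨_, ⟨Or.inl ⟨_, h, rfl⟩, by simp [stPattern]⟩, rfl⟩)

theorem enc2_app_ne_qr {f : F} {ts : Fin (ar f) → Term F ar} (h : Term.app f ts ∈ SR R) :
    C.enc2 (Term.app f ts) ≠ C.qr :=
  fun heq => C.hqr ⟨_, ⟨Or.inl ⟨_, h, rfl⟩, by simp [stPattern]⟩, heq⟩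

theorem mem_Γsat_of_mem_Γ' {ρ : TARule F ar Q} (hρ : ρ ∈ C.Γ') (hq : ρ.2.2 ∈ C.Qstates) :
    ρ ∈ C.Γsat := by
  rcases hρ with ((hρ | ⟨f, ts, hSR, rfl⟩) | ⟨f, ls, r, -, rfl⟩) | ⟨f, j, rfl⟩
  · exact hρ
  · exact absurd hq (C.enc2_app_notMem_Qstates hSR)
  all_goals exact absurd hq C.qr_notMem_Qstates

theorem eq_of_mem_Γ'_of_target_enc2 {ρ : TARule F ar Q} (hρ : ρ ∈ C.Γ') {g : F}
    {us : Fin (ar g) → Term F ar} (hSR : Term.app g us ∈ SR R)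
    (hq : ρ.2.2 = C.enc2 (Term.app g us)) :
    ρ = ⟨g, fun i => C.enc2 (stPattern (us i)), C.enc2 (Term.app g us)⟩ := by
  rcases hρ with ((hρ | ⟨f, ts, hSR', rfl⟩) | ⟨f, ls, r, -, rfl⟩) | ⟨f, j, rfl⟩
  · exact absurd ((statesOf_subset_iff.mp C.statesOf_Γsat ρ hρ).1)
      (hq ▸ C.enc2_app_notMem_Qstates hSR)
  · cases C.henc2 (Or.inl ⟨_, hSR', rfl⟩) (Or.inl ⟨_, hSR, rfl⟩) hq
    rfl
  all_goals exact absurd hq.symm (C.enc2_app_ne_qr hSR)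

theorem mem_of_mem_Γ'_of_target_qr {ρ : TARule F ar Q} (hρ : ρ ∈ C.Γ') (hq : ρ.2.2 = C.qr) :
    ρ ∈ RedexRules R C.enc2 C.qr ∪ QrProp C.enc C.qr := by
  rcases hρ with ((hρ | ⟨f, ts, hSR, rfl⟩) | hρ) | hρ
  · exact absurd ((statesOf_subset_iff.mp C.statesOf_Γsat ρ hρ).1) (hq ▸ C.qr_notMem_Qstates)
  · exact absurd hq (C.enc2_app_ne_qr hSR)
  · exact Or.inl hρ
  · exact Or.inr hρ

theorem reaches_Γ'_iff_reaches_Γsat {s : Term F ar} {q : Q} (hq : q ∈ C.Qstates) :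
    Reaches C.Γ' s q ↔ Reaches C.Γsat s q :=
  ⟨fun h => h.restrict C.statesOf_Γsat (fun _ => C.mem_Γsat_of_mem_Γ') hq,
    Reaches.mono fun _ => fun hρ => Or.inl (Or.inl (Or.inl hρ))⟩

theorem reaches_var0_of_ground {s : Term F ar} (hs : s.Ground) :
    Reaches C.Γ' s (C.enc (Term.var 0)) :=
  _root_.reaches_var0_of_ground
    (fun _ hρ => Or.inl (Or.inl (Or.inl (C.BProp_subset_Γsat hρ)))) hs

theorem reaches_enc2_of_ground {t : Term F ar} (ht : t ∈ SR R) {σ : ℕ → Term F ar}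
    (hs : (t.subst σ).Ground) : Reaches C.Γ' (t.subst σ) (C.enc2 (stPattern t)) := by
  induction t with
  | var n =>
    rw [stPattern, C.hx]
    exact C.reaches_var0_of_ground hs
  | app g us ih =>
    exact Reaches.app (fun i => ih i (arg_mem_SR ht i) (Term.ground_app_iff.mp hs i))
      (Or.inl (Or.inl (Or.inr ⟨g, us, ht, rfl⟩)))

theorem exists_subst_of_reaches_enc2 {t : Term F ar} (ht : t ∈ SR R) (hlin : t.Linear)
    {s : Term F ar} (h : Reaches C.Γ' s (C.enc2 (stPattern t))) : ∃ σ, s = t.subst σ := by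
  induction t generalizing s with
  | var n => exact ⟨fun _ => s, rfl⟩
  | app g us ih =>
    obtain ⟨hargs, hρ⟩ := h
    cases C.eq_of_mem_Γ'_of_target_enc2 hρ ht rfl
    exact Term.exists_subst_app_of_linear hlin fun i =>
      ih i (arg_mem_SR ht i) (hlin.arg i) (hargs i)

theorem reaches_qr_of_isRedex {s : Term F ar} (hs : s.Ground) (h : R.IsRedex s) :
    Reaches C.Γ' s C.qr := by
  obtain ⟨⟨l, r⟩, hlr, σ, rfl⟩ := h
  cases l with
  | var n => exact absurd rfl (R.lhs_not_var _ hlr n)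
  | app g ls =>
    exact Reaches.app
      (fun i => C.reaches_enc2_of_ground (lhs_arg_mem_SR hlr i) (Term.ground_app_iff.mp hs i))
      (Or.inl (Or.inr ⟨g, ls, r, hlr, rfl⟩))

theorem reaches_qr_of_arg {f : F} {ts : Fin (ar f) → Term F ar} (hs : (Term.app f ts).Ground)
    {i : Fin (ar f)} (h : Reaches C.Γ' (ts i) C.qr) : Reaches C.Γ' (Term.app f ts) C.qr := by
  refine Reaches.app (qs := fun j => if j = i then C.qr else C.enc (Term.var 0))
    (fun j => ?_) (Or.inr ⟨f, i, rfl⟩)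
  by_cases hj : j = i
  · subst hj
    simpa using h
  · simpa [hj] using C.reaches_var0_of_ground (Term.ground_app_iff.mp hs j)

theorem isRedex_or_reaches_qr_arg (hll : R.LeftLinear) {f : F} {ts : Fin (ar f) → Term F ar}
    (h : Reaches C.Γ' (Term.app f ts) C.qr) :
    R.IsRedex (Term.app f ts) ∨ ∃ i, Reaches C.Γ' (ts i) C.qr := by
  obtain ⟨hargs, hρ⟩ := h
  rcases C.mem_of_mem_Γ'_of_target_qr hρ rfl with ⟨g, ls, r, hlr, heq⟩ | ⟨g, j, heq⟩
  · cases heq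
    have hlin : (Term.app f ls).Linear := hll _ hlr
    obtain ⟨σ, hσ⟩ := Term.exists_subst_app_of_linear hlin fun i =>
      C.exists_subst_of_reaches_enc2 (lhs_arg_mem_SR hlr i) (hlin.arg i) (hargs i)
    exact Or.inl ⟨_, hlr, σ, hσ⟩
  · cases heq
    exact Or.inr ⟨j, by simpa using hargs j⟩

theorem reaches_qr_iff (hll : R.LeftLinear) {s : Term F ar} (hs : s.Ground) :
    Reaches C.Γ' s C.qr ↔ R.Reducible s := by
  induction s with
  | var n => exact absurd hs (Term.not_ground_var n)
  | app f ts ih =>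
    have hargs := Term.ground_app_iff.mp hs
    rw [TRS.reducible_app_iff]
    constructor
    · intro h
      exact (C.isRedex_or_reaches_qr_arg hll h).imp_right
        fun ⟨i, hi⟩ => ⟨i, (ih i (hargs i)).mp hi⟩
    · rintro (h | ⟨i, hi⟩)
      · exact C.reaches_qr_of_isRedex hs h
      · exact C.reaches_qr_of_arg hs ((ih i (hargs i)).mpr hi)

end CpSetup

theorem statement5_general {G : Type} [Fintype G] {arG : G → ℕ} {Q : Type} [Fintype Q]
    (R : TRS G arG) (hlin : R.IsLinear)
    (T : Set (Term G arG)) (C : CpSetup Q R T) :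
    (∀ s : Term G arG, s.Ground → (Reaches C.Γ' s C.qr ↔ R.Reducible s)) ∧
    { s : Term G arG | s.Ground ∧ ∃ q ∈ C.A.final, Reaches C.Γ' s q } =
      { s : Term G arG | s.Ground ∧ ∃ q ∈ C.A.final, Reaches C.toCSetup.Γsat s q } := by
  refine ⟨fun s hs => C.reaches_qr_iff hlin.1 hs, ?_⟩
  ext s
  exact and_congr_right fun _ => exists_congr fun q => and_congr_right fun hq =>
    C.reaches_Γ'_iff_reaches_Γsat (Or.inl (C.hfinal hq))

/-- Let `ℛ` be a linear growing TRS over `𝓖` and `𝒞'_T(ℛ)` the extension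
of `𝒞_T(ℛ)` by the redex-recognition states `⟪t⟫` and `q_r`.  Then a ground term `s`
satisfies `s →_{Γ'}* q_r` iff `s` is reducible with respect to `ℛ`; consequently
`L(𝒞'_T(ℛ)) = L(𝒞_T(ℛ))`. -/
theorem statement5 {G : Type} [Fintype G] {arG : G → ℕ} {Q : Type} [Fintype Q]
    (R : TRS G arG) (hlin : R.IsLinear) (hgrow : R.Growing)
    (T : Set (Term G arG)) (C : CpSetup Q R T) :
    (∀ s : Term G arG, s.Ground → (Reaches C.Γ' s C.qr ↔ R.Reducible s)) ∧
    { s : Term G arG | s.Ground ∧ ∃ q ∈ C.A.final, Reaches C.Γ' s q } =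
      { s : Term G arG | s.Ground ∧ ∃ q ∈ C.A.final, Reaches C.toCSetup.Γsat s q } :=
  statement5_general R hlin T C
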